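/- For a countable elementary substructure M of a transitive ZFC⁻ model 𝓗 and x ∈ ⋃M, Hull(M,x) is itself an elementary substructure of 𝓗. -/

import Mathlib

noncomputable section

namespace CcPaper

/-! ### First-order logic over the membership relation -/

/-- First-order formulas in the language of set theory with `n` free variables. -/
inductive Fml : ℕ → Type
  | mem : ∀ {n}, Fin n → Fin n → Fml n
  | eq : ∀ {n}, Fin n → Fin n → Fml n
  | not : ∀ {n}, Fml n → Fml n
  | and : ∀ {n}, Fml n → Fml n → Fml n
  | ex : ∀ {n}, Fml (n + 1) → Fml n

/-- Satisfaction of a formula in a class `D` of ZF-sets, quantifiers relativized to `D`. -/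
def Sat (D : Set ZFSet.{0}) : ∀ {n}, Fml n → (Fin n → ZFSet.{0}) → Prop
  | _, .mem i j, v => v i ∈ v j
  | _, .eq i j, v => v i = v j
  | _, .not φ, v => ¬ Sat D φ v
  | _, .and φ ψ, v => Sat D φ v ∧ Sat D ψ v
  | _, .ex φ, v => ∃ x ∈ D, Sat D φ (Fin.snoc v x)

/-- `M` is an elementary substructure of the class `H` (w.r.t. `∈`). -/
def ElemSub (M H : Set ZFSet.{0}) : Prop :=
  M ⊆ H ∧ ∀ {n : ℕ} (φ : Fml n) (v : Fin n → ZFSet.{0}), (∀ i, v i ∈ M) →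
    (Sat M φ v ↔ Sat H φ v)

/-- A transitive class. -/
def TransClass (H : Set ZFSet.{0}) : Prop := ∀ x ∈ H, ∀ y ∈ x, y ∈ H

/-! ### Ordinals, ω₁, functions, hulls -/

/-- `x` is a (von Neumann) ordinal. -/
def IsOrd (x : ZFSet.{0}) : Prop := x.IsTransitive ∧ ∀ y ∈ x, ZFSet.IsTransitive y

/-- `o` is the first uncountable ordinal. -/
def IsOmega1 (o : ZFSet.{0}) : Prop :=
  IsOrd o ∧ ¬ o.toSet.Countable ∧ ∀ β ∈ o.toSet, β.toSet.Countable

/-- `f` is a (set-)function, i.e. a single-valued set of Kuratowski pairs. -/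
def IsFun (f : ZFSet.{0}) : Prop :=
  (∀ z ∈ f, ∃ a b, z = ZFSet.pair a b) ∧
    ∀ a b b', ZFSet.pair a b ∈ f → ZFSet.pair a b' ∈ f → b = b'

/-- `x` belongs to the domain of `f`. -/
def domMem (f x : ZFSet.{0}) : Prop := ∃ y, ZFSet.pair x y ∈ f

/-- `f` is a function with domain `d`. -/
def FunOn (f d : ZFSet.{0}) : Prop := IsFun f ∧ ∀ x, domMem f x ↔ x ∈ d

/-- `Hull M x = { f(x) : f ∈ M, x ∈ dom f }`. -/
def Hull (M : Set ZFSet.{0}) (x : ZFSet.{0}) : Set ZFSet.{0} :=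
  {y | ∃ f ∈ M, IsFun f ∧ ZFSet.pair x y ∈ f}

/-- `x ∥_{ω₁} M` : `Hull M x` and `M` contain the same elements of `ω₁`. -/
def ParallelO (ω1 x : ZFSet.{0}) (M : Set ZFSet.{0}) : Prop :=
  ∀ z ∈ ω1.toSet, (z ∈ Hull M x ↔ z ∈ M)

/-- `δ` is the ordinal `M ∩ ω₁`, i.e. `δ(M)`. -/
def DeltaIs (ω1 : ZFSet.{0}) (M : Set ZFSet.{0}) (δ : ZFSet.{0}) : Prop :=
  IsOrd δ ∧ ∀ z : ZFSet.{0}, z ∈ δ ↔ (z ∈ ω1.toSet ∧ z ∈ M)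

/-! ### H_θ, cardinality, regularity -/

/-- `y` lies in the transitive closure of `x`. -/
def InTC (y x : ZFSet.{0}) : Prop :=
  ∃ n : ℕ, ∃ c : Fin (n + 1) → ZFSet.{0}, c 0 ∈ x ∧
    (∀ i : Fin n, c i.succ ∈ c i.castSucc) ∧ c (Fin.last n) = y

/-- `x` has cardinality (strictly) less than the ordinal `θ`. -/
def CardLt (x θ : ZFSet.{0}) : Prop :=
  ∃ β ∈ θ.toSet, ∃ f : x.toSet → β.toSet, Function.Injective f

/-- `x` has cardinality at most that of `κ`. -/
def CardLe (x κ : ZFSet.{0}) : Prop := ∃ f : x.toSet → κ.toSet, Function.Injective f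

/-- The class `H_θ` of sets hereditarily of cardinality `< θ`. -/
def HClass (θ : ZFSet.{0}) : Set ZFSet.{0} :=
  {x | CardLt x θ ∧ ∀ y, InTC y x → CardLt y θ}

/-- `θ` is a regular uncountable cardinal. -/
def IsRegular (θ : ZFSet.{0}) : Prop :=
  IsOrd θ ∧ ZFSet.omega ∈ θ ∧ ¬ θ.toSet.Countable ∧
    ∀ β ∈ θ.toSet, ∀ f : ZFSet.{0} → ZFSet.{0}, (∀ x ∈ β.toSet, f x ∈ θ) →
      ∃ γ ∈ θ.toSet, ∀ x ∈ β.toSet, f x ∈ γ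

/-- `x ≪ θ` : the double powerset of `x` belongs to `H_θ`. -/
def Gg (x θ : ZFSet.{0}) : Prop := ZFSet.powerset (ZFSet.powerset x) ∈ HClass θ

/-! ### ZFC⁻ and ZFC• -/

/-- `r` is a wellordering of `a`, with "every nonempty subset" relativized to `H`. -/
def IsWellOrderOn (H : Set ZFSet.{0}) (r a : ZFSet.{0}) : Prop :=
  (∀ z ∈ r, ∃ x y, x ∈ a ∧ y ∈ a ∧ z = ZFSet.pair x y) ∧
  (∀ x ∈ a.toSet, ∀ y ∈ a.toSet, x ≠ y →
    (ZFSet.pair x y ∈ r ↔ ZFSet.pair y x ∉ r)) ∧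
  (∀ x y z : ZFSet.{0}, ZFSet.pair x y ∈ r → ZFSet.pair y z ∈ r → ZFSet.pair x z ∈ r) ∧
  (∀ b : ZFSet.{0}, b ∈ H → b ⊆ a → (∃ x, x ∈ b) →
    ∃ x, x ∈ b ∧ ∀ y, y ∈ b → y ≠ x → ZFSet.pair x y ∈ r)

/-- `H` is a model of ZFC⁻ (= ZF minus powerset, with collection and wellordering),
stated semantically for a class `H`. -/
def ModelsZFCminus (H : Set ZFSet.{0}) : Prop :=
  (∅ : ZFSet.{0}) ∈ H ∧
  ZFSet.omega ∈ H ∧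
  (∀ a ∈ H, ∀ b ∈ H, ZFSet.pair a b ∈ H) ∧
  (∀ a ∈ H, ZFSet.sUnion a ∈ H) ∧
  -- separation scheme
  (∀ (n : ℕ) (φ : Fml (n + 1)) (v : Fin n → ZFSet.{0}), (∀ i, v i ∈ H) → ∀ a ∈ H,
    ∃ b ∈ H, ∀ x : ZFSet.{0}, x ∈ b ↔ (x ∈ a ∧ Sat H φ (Fin.snoc v x))) ∧
  -- collection scheme
  (∀ (n : ℕ) (φ : Fml (n + 2)) (v : Fin n → ZFSet.{0}), (∀ i, v i ∈ H) → ∀ a ∈ H,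
    (∀ x ∈ a.toSet, ∃ y ∈ H, Sat H φ (Fin.snoc (Fin.snoc v x) y)) →
    ∃ b ∈ H, ∀ x ∈ a.toSet, ∃ y, y ∈ b ∧ Sat H φ (Fin.snoc (Fin.snoc v x) y)) ∧
  -- wellordering axiom
  (∀ a ∈ H, ∃ r, r ∈ H ∧ IsWellOrderOn H r a)

/-! ### Clubs, stationarity, antichains, selfgenericity, precipitousness -/

/-- `C ⊆ ω₁` is club in `ω₁`. -/
def IsClub (ω1 C : ZFSet.{0}) : Prop :=
  C ⊆ ω1 ∧ (∀ α ∈ ω1.toSet, ∃ β, β ∈ C ∧ α ∈ β) ∧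
    ∀ δ ∈ ω1.toSet, (∃ β, β ∈ δ) →
      (∀ α ∈ δ.toSet, ∃ β, β ∈ C ∧ α ∈ β ∧ β ∈ δ) → δ ∈ C

/-- `S` is a stationary subset of `ω₁`, where only clubs belonging to the class `H`
are considered (`H = Set.univ` gives genuine stationarity). -/
def StatIn (H : Set ZFSet.{0}) (ω1 S : ZFSet.{0}) : Prop :=
  S ⊆ ω1 ∧ ∀ C : ZFSet.{0}, C ∈ H → IsClub ω1 C → ∃ x, x ∈ S ∧ x ∈ C

/-- Genuine stationarity in `ω₁`. -/
abbrev Stat (ω1 S : ZFSet.{0}) : Prop := StatIn Set.univ ω1 S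

/-- `A` is a maximal antichain in `NS_{ω₁}⁺` (relative to the class `H`). -/
def MaxAC (H : Set ZFSet.{0}) (ω1 A : ZFSet.{0}) : Prop :=
  (∀ S ∈ A.toSet, StatIn H ω1 S) ∧
  (∀ S ∈ A.toSet, ∀ T ∈ A.toSet, S ≠ T → ¬ StatIn H ω1 (S ∩ T)) ∧
  (∀ S : ZFSet.{0}, S ∈ H → StatIn H ω1 S → ∃ T ∈ A.toSet, StatIn H ω1 (S ∩ T))

/-- A countable `M` is selfgeneric (relative to the ambient class `H`). -/
def SelfGenericIn (H : Set ZFSet.{0}) (ω1 : ZFSet.{0}) (M : Set ZFSet.{0}) : Prop :=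
  ∀ A : ZFSet.{0}, A ∈ M → MaxAC H ω1 A →
    ∃ S, S ∈ A ∧ S ∈ M ∧ ∃ δ, DeltaIs ω1 M δ ∧ δ ∈ S

/-- `W` is a maximal antichain of stationary subsets of `S` (relative to `H`). -/
def MaxACBelow (H : Set ZFSet.{0}) (ω1 S W : ZFSet.{0}) : Prop :=
  (∀ T ∈ W.toSet, T ⊆ S ∧ StatIn H ω1 T) ∧
  (∀ T ∈ W.toSet, ∀ T' ∈ W.toSet, T ≠ T' → ¬ StatIn H ω1 (T ∩ T')) ∧
  (∀ T : ZFSet.{0}, T ∈ H → T ⊆ S → StatIn H ω1 T → ∃ T' ∈ W.toSet, StatIn H ω1 (T ∩ T'))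

/-- Jech's combinatorial characterization of precipitousness of `NS_{ω₁}`,
relativized to the class `H`. -/
def PrecipitousIn (H : Set ZFSet.{0}) (ω1 : ZFSet.{0}) : Prop :=
  ∀ S : ZFSet.{0}, S ∈ H → StatIn H ω1 S →
    ∀ W : ℕ → ZFSet.{0}, (∀ n, W n ∈ H) → (∀ n, MaxACBelow H ω1 S (W n)) →
      (∀ n, ∀ T ∈ (W (n + 1)).toSet, ∃ T' ∈ (W n).toSet, T ⊆ T') →
      ∃ T : ℕ → ZFSet.{0}, (∀ n, T n ∈ (W n).toSet) ∧ (∀ n, T (n + 1) ⊆ T n) ∧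
        ∃ x, ∀ n, x ∈ T n

/-- ZFC• : ZFC⁻ + the double powerset of ω₁ exists + NS_{ω₁} is precipitous,
for a class `H`. -/
def PowIn (H : Set ZFSet.{0}) (a p : ZFSet.{0}) : Prop := p ∈ H ∧ ∀ x, x ∈ p ↔ (x ∈ H ∧ x ⊆ a)

/-- The ordinal `δ` is `ω₁` as computed inside the class `H`. -/
def IsOmega1Of (H : Set ZFSet.{0}) (δ : ZFSet.{0}) : Prop :=
  δ ∈ H ∧ IsOrd δ ∧
  (∀ β ∈ δ.toSet, ∃ f, f ∈ H ∧ IsFun f ∧ (∀ x, domMem f x ↔ x ∈ ZFSet.omega) ∧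
    ∀ y ∈ β.toSet, ∃ n, ZFSet.pair n y ∈ f) ∧
  ¬ ∃ f, f ∈ H ∧ IsFun f ∧ (∀ x, domMem f x ↔ x ∈ ZFSet.omega) ∧
    ∀ y ∈ δ.toSet, ∃ n, ZFSet.pair n y ∈ f

def ModelsZFCbullet (H : Set ZFSet.{0}) : Prop :=
  ModelsZFCminus H ∧ ∃ δ, IsOmega1Of H δ ∧
    (∃ p q, PowIn H δ p ∧ PowIn H p q) ∧ PrecipitousIn H δ

/-! ### Stationarity in `[H_θ]^ω` and projective stationarity -/

def ClosedUnder (M : Set ZFSet.{0}) (F : List ZFSet.{0} → ZFSet.{0}) : Prop :=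
  ∀ l : List ZFSet.{0}, (∀ x ∈ l, x ∈ M) → F l ∈ M

/-- `X` is a stationary family of countable subsets of the class `A`. -/
def StatPow (A : Set ZFSet.{0}) (X : Set (Set ZFSet.{0})) : Prop :=
  ∀ F : List ZFSet.{0} → ZFSet.{0}, (∀ l, F l ∈ A) →
    ∃ M ∈ X, M.Countable ∧ M ⊆ A ∧ ClosedUnder M F

/-- `X` contains a club of countable subsets of the class `A`. -/
def ClubPow (A : Set ZFSet.{0}) (X : Set (Set ZFSet.{0})) : Prop :=
  ∃ F : List ZFSet.{0} → ZFSet.{0}, (∀ l, F l ∈ A) ∧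
    ∀ M : Set ZFSet.{0}, M.Countable → M ⊆ A → ClosedUnder M F → M ∈ X

/-- `X` is a projective stationary family of countable subsets of `A`. -/
def ProjStatPow (ω1 : ZFSet.{0}) (A : Set ZFSet.{0}) (X : Set (Set ZFSet.{0})) : Prop :=
  ∀ S : ZFSet.{0}, Stat ω1 S →
    StatPow A {M | M ∈ X ∧ ∃ δ, DeltaIs ω1 M δ ∧ δ ∈ S}

/-! ### Forcing notions (as ZF-sets) -/

/-- `p ≤ q` in the order coded by the set of pairs `le`. -/
def pLe (le p q : ZFSet.{0}) : Prop := ZFSet.pair p q ∈ le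

def IsForcing (P le : ZFSet.{0}) : Prop :=
  (∀ z ∈ le, ∃ p q, p ∈ P ∧ q ∈ P ∧ z = ZFSet.pair p q) ∧
  (∀ p ∈ P.toSet, pLe le p p) ∧
  (∀ p q r : ZFSet.{0}, pLe le p q → pLe le q r → pLe le p r)

/-- Compatibility of conditions. -/
def CompatC (P le p q : ZFSet.{0}) : Prop := ∃ r, r ∈ P ∧ pLe le r p ∧ pLe le r q

/-- `A` is a maximal antichain in the forcing `(P, le)`. -/
def PMaxAC (P le A : ZFSet.{0}) : Prop :=
  A ⊆ P ∧ (∀ p ∈ A.toSet, ∀ q ∈ A.toSet, p ≠ q → ¬ CompatC P le p q) ∧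
    ∀ p ∈ P.toSet, ∃ q ∈ A.toSet, CompatC P le p q

/-- `p'` is an `(M,ℙ)`-semigeneric condition. -/
def Semigeneric (ω1 P le : ZFSet.{0}) (M : Set ZFSet.{0}) (p' : ZFSet.{0}) : Prop :=
  ∀ q, q ∈ P → pLe le q p' → ∀ A : ZFSet.{0}, A ∈ M → PMaxAC P le A →
    ∃ r, r ∈ A ∧ CompatC P le r q ∧ ParallelO ω1 r M

/-- `p'` is a strongly `(M,ℙ)`-semigeneric condition. -/
def StronglySemigeneric (ω1 P le : ZFSet.{0}) (M : Set ZFSet.{0}) (p' : ZFSet.{0}) : Prop :=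
  ∀ q, q ∈ P → pLe le q p' → ∃ t, t ∈ P ∧ ParallelO ω1 t M ∧
    ∀ r, r ∈ Hull M t → r ∈ P → pLe le r t → CompatC P le r q

/-- `ℙ` is semiproper with respect to `M`. -/
def SemiproperWrt (ω1 P le : ZFSet.{0}) (M : Set ZFSet.{0}) : Prop :=
  ∀ p, p ∈ P → p ∈ M → ∃ p', p' ∈ P ∧ pLe le p' p ∧ Semigeneric ω1 P le M p'

/-- `ℙ` is strongly semiproper with respect to `M`. -/
def StronglySemiproperWrt (ω1 P le : ZFSet.{0}) (M : Set ZFSet.{0}) : Prop :=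
  ∀ p, p ∈ P → p ∈ M → ∃ p', p' ∈ P ∧ pLe le p' p ∧ StronglySemigeneric ω1 P le M p'

/-- `p'` is a strongly `(M,ℙ)`-generic condition (Mitchell). -/
def StronglyGeneric (P le : ZFSet.{0}) (M : Set ZFSet.{0}) (p' : ZFSet.{0}) : Prop :=
  ∀ q, q ∈ P → pLe le q p' → ∃ t, t ∈ P ∧ t ∈ M ∧
    ∀ r, r ∈ M → r ∈ P → pLe le r t → CompatC P le r q

def StronglyProperWrt (P le : ZFSet.{0}) (M : Set ZFSet.{0}) : Prop :=
  ∀ p, p ∈ P → p ∈ M → ∃ p', p' ∈ P ∧ pLe le p' p ∧ StronglyGeneric P le M p'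

/-- `ℙ` is strongly proper. -/
def StronglyProper (P le : ZFSet.{0}) : Prop :=
  ∀ θ : ZFSet.{0}, IsRegular θ → Gg (ZFSet.pair P le) θ →
    ClubPow (HClass θ)
      {M | M.Countable ∧ ElemSub M (HClass θ) ∧ StronglyProperWrt P le M}

/-- `ℙ` is strongly ssp. -/
def StronglySSP (ω1 P le : ZFSet.{0}) : Prop :=
  ∀ θ : ZFSet.{0}, IsRegular θ → Gg (ZFSet.pair P le) θ →
    ProjStatPow ω1 (HClass θ)
      {M | M.Countable ∧ ElemSub M (HClass θ) ∧ StronglySemiproperWrt ω1 P le M}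

/-! ### The games -/

/-- Rules of a game in which the moves of P2 grow a model via `Hull`. -/
structure GameRules : Type 2 where
  legal1 : Set ZFSet.{0} → ZFSet.{0} → Prop
  legal2 : Set ZFSet.{0} → ZFSet.{0} → ZFSet.{0} → Prop

/-- The models built from P2's moves `b`. -/
def Mods (M0 : Set ZFSet.{0}) (b : ℕ → ZFSet.{0}) : ℕ → Set ZFSet
  | 0 => M0
  | n + 1 => Hull (Mods M0 b n) (b n)

/-- A strategy for P2: sees the past rounds and P1's current move. -/
abbrev Strat2 : Type 1 := List (ZFSet.{0} × ZFSet.{0}) → ZFSet.{0} → ZFSet.{0}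

/-- A strategy for P1: sees the past rounds. -/
abbrev Strat1 : Type 1 := List (ZFSet.{0} × ZFSet.{0}) → ZFSet.{0}

def hist2 (σ : Strat2) (a : ℕ → ZFSet.{0}) : ℕ → List (ZFSet × ZFSet.{0})
  | 0 => []
  | n + 1 => hist2 σ a n ++ [(a n, σ (hist2 σ a n) (a n))]

/-- P2's responses when following `σ` against the P1-moves `a`. -/
def resp (σ : Strat2) (a : ℕ → ZFSet.{0}) (n : ℕ) : ZFSet.{0} := σ (hist2 σ a n) (a n)

/-- `σ` is a winning strategy for P2 (the Constructor): as long as P1 has played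
legally, P2's answers are legal. -/
def P2Wins (G : GameRules) (M0 : Set ZFSet.{0}) (σ : Strat2) : Prop :=
  ∀ a : ℕ → ZFSet.{0}, ∀ n : ℕ,
    (∀ k, k ≤ n → G.legal1 (Mods M0 (resp σ a) k) (a k)) →
    G.legal2 (Mods M0 (resp σ a) n) (a n) (resp σ a n)

def hist1 (τ : Strat1) (b : ℕ → ZFSet.{0}) : ℕ → List (ZFSet × ZFSet.{0})
  | 0 => []
  | n + 1 => hist1 τ b n ++ [(τ (hist1 τ b n), b n)]

def move1 (τ : Strat1) (b : ℕ → ZFSet.{0}) (n : ℕ) : ZFSet.{0} := τ (hist1 τ b n)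

/-- `τ` is a winning strategy for P1 (the Challenger): P1 always moves legally
(as long as P2 has), and eventually P2's answer is illegal. -/
def P1Wins (G : GameRules) (M0 : Set ZFSet.{0}) (τ : Strat1) : Prop :=
  ∀ b : ℕ → ZFSet.{0},
    (∀ n, (∀ k, k < n → G.legal2 (Mods M0 b k) (move1 τ b k) (b k)) →
      G.legal1 (Mods M0 b n) (move1 τ b n)) ∧
    ∃ n, (∀ k, k < n → G.legal2 (Mods M0 b k) (move1 τ b k) (b k)) ∧
      ¬ G.legal2 (Mods M0 b n) (move1 τ b n) (b n)

/-- The antichain catching game `G^cat_M` (antichains relative to the class `H`). -/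
def catRules (H : Set ZFSet.{0}) (ω1 : ZFSet.{0}) : GameRules where
  legal1 M A := A ∈ M ∧ MaxAC H ω1 A
  legal2 M A S := S ∈ A ∧ (∃ δ, DeltaIs ω1 M δ ∧ δ ∈ S) ∧ ParallelO ω1 S M

/-- The capturing game `G^cap_M(X)`. -/
def capRules (ω1 : ZFSet.{0}) (X : Set ZFSet.{0}) : GameRules where
  legal1 _ x := x ∈ X
  legal2 M x f := IsFun f ∧ (∀ y, domMem f y ↔ y ∈ ω1) ∧
    (∀ a b, ZFSet.pair a b ∈ f → b ∈ X) ∧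
    (∃ δ, DeltaIs ω1 M δ ∧ ZFSet.pair δ x ∈ f) ∧ ParallelO ω1 f M

/-- The catching-capturing game `G^{c-c}_M(X)`; P1's moves are tagged pairs. -/
def ccRules (H : Set ZFSet.{0}) (ω1 : ZFSet.{0}) (X : Set ZFSet.{0}) : GameRules where
  legal1 M m := (∃ A, m = ZFSet.pair ∅ A ∧ (catRules H ω1).legal1 M A) ∨
    (∃ x, m = ZFSet.pair {∅} x ∧ x ∈ X)
  legal2 M m r := (∃ A, m = ZFSet.pair ∅ A ∧ (catRules H ω1).legal2 M A r) ∨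
    (∃ x, m = ZFSet.pair {∅} x ∧ (capRules ω1 X).legal2 M x r)

end CcPaper
namespace CcPaper

open Classical in
/-! ### Auxiliary logical infrastructure -/

namespace Fml

def imp {n : ℕ} (p q : Fml n) : Fml n := .not (.and p (.not q))
def orF {n : ℕ} (p q : Fml n) : Fml n := .not (.and (.not p) (.not q))
def iffF {n : ℕ} (p q : Fml n) : Fml n := .and (imp p q) (imp q p)
def allF {n : ℕ} (φ : Fml (n + 1)) : Fml n := .not (.ex (.not φ))

/-- Rename (substitute) variables along a map. -/
def rename : ∀ {n m : ℕ}, (Fin n → Fin m) → Fml n → Fml m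
  | _, _, ρ, .mem i j => .mem (ρ i) (ρ j)
  | _, _, ρ, .eq i j => .eq (ρ i) (ρ j)
  | _, _, ρ, .not φ => .not (rename ρ φ)
  | _, _, ρ, .and φ ψ => .and (rename ρ φ) (rename ρ ψ)
  | _, _, ρ, .ex φ => .ex (rename (Fin.snoc (fun j => (ρ j).castSucc) (Fin.last _)) φ)

end Fml

section SatLemmas

variable {D : Set ZFSet.{0}}

@[simp] lemma sat_mem {n} (i j : Fin n) (v) : Sat D (.mem i j) v ↔ v i ∈ v j := Iff.rfl
@[simp] lemma sat_eq {n} (i j : Fin n) (v) : Sat D (.eq i j) v ↔ v i = v j := Iff.rfl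
@[simp] lemma sat_not {n} (φ : Fml n) (v) : Sat D (.not φ) v ↔ ¬ Sat D φ v := Iff.rfl
@[simp] lemma sat_and {n} (φ ψ : Fml n) (v) : Sat D (.and φ ψ) v ↔ Sat D φ v ∧ Sat D ψ v :=
  Iff.rfl
@[simp] lemma sat_ex {n} (φ : Fml (n+1)) (v) :
    Sat D (.ex φ) v ↔ ∃ x ∈ D, Sat D φ (Fin.snoc v x) := Iff.rfl

@[simp] lemma sat_imp {n} (p q : Fml n) (v) :
    Sat D (p.imp q) v ↔ (Sat D p v → Sat D q v) := by
  simp only [Fml.imp, sat_not, sat_and]; tauto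

@[simp] lemma sat_orF {n} (p q : Fml n) (v) :
    Sat D (p.orF q) v ↔ (Sat D p v ∨ Sat D q v) := by
  simp only [Fml.orF, sat_not, sat_and]; tauto

@[simp] lemma sat_iffF {n} (p q : Fml n) (v) :
    Sat D (p.iffF q) v ↔ (Sat D p v ↔ Sat D q v) := by
  simp only [Fml.iffF, sat_imp, sat_and]; tauto

@[simp] lemma sat_allF {n} (φ : Fml (n+1)) (v) :
    Sat D φ.allF v ↔ ∀ x ∈ D, Sat D φ (Fin.snoc v x) := by
  simp [Fml.allF]

lemma sat_rename {n m} (ρ : Fin n → Fin m) (φ : Fml n) (v : Fin m → ZFSet.{0}) :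
    Sat D (Fml.rename ρ φ) v ↔ Sat D φ (v ∘ ρ) := by
  induction φ generalizing m with
  | mem i j => rfl
  | eq i j => rfl
  | not φ ih => simp [Fml.rename, ih]
  | and φ ψ ih₁ ih₂ => simp [Fml.rename, ih₁, ih₂]
  | ex φ ih =>
      simp only [Fml.rename, sat_ex, ih]
      refine exists_congr fun x => and_congr_right fun _ => iff_of_eq (congrArg _ ?_)
      funext i
      refine Fin.lastCases ?_ (fun j => ?_) i
      · simp only [Function.comp_apply, Fin.snoc_last]
      · simp only [Function.comp_apply, Fin.snoc_castSucc]

/-- Block of `k` existential quantifiers. -/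
def exs : ∀ (k : ℕ) {m : ℕ}, Fml (m + k) → Fml m
  | 0, _, φ => φ
  | k + 1, _, φ => exs k (.ex φ)

/-- Block of `k` universal quantifiers. -/
def alls : ∀ (k : ℕ) {m : ℕ}, Fml (m + k) → Fml m
  | 0, _, φ => φ
  | k + 1, _, φ => alls k φ.allF

lemma append_snoc {m k : ℕ} (v : Fin m → ZFSet.{0}) (w : Fin k → ZFSet.{0}) (x : ZFSet.{0}) :
    (Fin.snoc (Fin.append v w) x : Fin (m + k + 1) → ZFSet.{0}) = Fin.append v (Fin.snoc w x) := by
  funext i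
  refine Fin.lastCases ?_ (fun j => ?_) i
  · have : Fin.last (m + k) = Fin.natAdd m (Fin.last k) := by
      ext; simp
    rw [Fin.snoc_last, this, Fin.append_right, Fin.snoc_last]
  · rw [Fin.snoc_castSucc]
    refine Fin.addCases (fun p => ?_) (fun p => ?_) j
    · have : (Fin.castAdd k p).castSucc = Fin.castAdd (k+1) p := by ext; simp
      rw [Fin.append_left, this, Fin.append_left]
    · have : (Fin.natAdd m p).castSucc = Fin.natAdd m p.castSucc := by ext; simp
      rw [Fin.append_right, this, Fin.append_right, Fin.snoc_castSucc]

lemma append_zero {m : ℕ} (v : Fin m → ZFSet.{0}) (w : Fin 0 → ZFSet.{0}) :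
    Fin.append v w = v :=
  funext fun i => Fin.append_left v w i

lemma sat_exs {k m : ℕ} (φ : Fml (m + k)) (v : Fin m → ZFSet.{0}) :
    Sat D (exs k φ) v ↔ ∃ w : Fin k → ZFSet.{0}, (∀ i, w i ∈ D) ∧ Sat D φ (Fin.append v w) := by
  induction k with
  | zero =>
      simp only [exs]
      constructor
      · intro h
        exact ⟨Fin.elim0, fun i => i.elim0, by rw [append_zero]; exact h⟩
      · rintro ⟨w, -, h⟩
        rwa [append_zero] at h
  | succ k ih =>
      simp only [exs, ih, sat_ex]
      constructor
      · rintro ⟨w, hw, x, hx, hsat⟩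
        refine ⟨Fin.snoc w x, ?_, ?_⟩
        · intro i
          refine Fin.lastCases ?_ (fun j => ?_) i
          · rwa [Fin.snoc_last]
          · rw [Fin.snoc_castSucc]; exact hw j
        · rwa [append_snoc] at hsat
      · rintro ⟨w, hw, hsat⟩
        refine ⟨fun i => w i.castSucc, fun i => hw _, w (Fin.last k), hw _, ?_⟩
        rw [append_snoc]
        have e : (Fin.snoc (fun i => w i.castSucc) (w (Fin.last k)) : Fin (k+1) → ZFSet.{0}) = w :=
          Fin.snoc_init_self w
        rw [e]
        exact hsat

lemma sat_alls {k m : ℕ} (φ : Fml (m + k)) (v : Fin m → ZFSet.{0}) :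
    Sat D (alls k φ) v ↔ ∀ w : Fin k → ZFSet.{0}, (∀ i, w i ∈ D) → Sat D φ (Fin.append v w) := by
  induction k with
  | zero =>
      simp only [alls]
      constructor
      · intro h w _
        rw [append_zero]; exact h
      · intro h
        have := h Fin.elim0 (fun i => i.elim0)
        rwa [append_zero] at this
  | succ k ih =>
      simp only [alls, ih, sat_allF]
      constructor
      · intro h w hw
        have h1 := h (fun i => w i.castSucc) (fun i => hw _) (w (Fin.last k)) (hw _)
        rw [append_snoc] at h1
        have e : (Fin.snoc (fun i => w i.castSucc) (w (Fin.last k)) : Fin (k+1) → ZFSet.{0}) = w :=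
          Fin.snoc_init_self w
        rwa [e] at h1
      · intro h w hw x hx
        rw [append_snoc]
        refine h (Fin.snoc w x) ?_
        intro i
        refine Fin.lastCases ?_ (fun j => ?_) i
        · rwa [Fin.snoc_last]
        · rw [Fin.snoc_castSucc]; exact hw j

/-- Finite conjunction (over a context with at least one variable). -/
def conjList {m : ℕ} (l : List (Fml (m + 1))) : Fml (m + 1) :=
  l.foldr .and (.eq 0 0)

lemma sat_conjList {m : ℕ} (l : List (Fml (m + 1))) (v) :
    Sat D (conjList l) v ↔ ∀ ψ ∈ l, Sat D ψ v := by
  induction l with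
  | nil => simp [conjList, Sat]
  | cons a l ih => simp [conjList, Sat] at ih ⊢; tauto

end SatLemmas

end CcPaper
namespace CcPaper

/-! ### Set-theoretic formula components and absoluteness -/

/-- `t = {a}` -/
def singF {m : ℕ} (t a : Fin m) : Fml m :=
  Fml.allF (Fml.iffF (.mem (Fin.last m) t.castSucc) (.eq (Fin.last m) a.castSucc))

/-- `t = {a, b}` -/
def upairF {m : ℕ} (t a b : Fin m) : Fml m :=
  Fml.allF (Fml.iffF (.mem (Fin.last m) t.castSucc)
    (Fml.orF (.eq (Fin.last m) a.castSucc) (.eq (Fin.last m) b.castSucc)))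

/-- `p = ⟨a, b⟩` (Kuratowski) -/
def isPairF {m : ℕ} (p a b : Fin m) : Fml m :=
  Fml.allF (Fml.iffF (.mem (Fin.last m) p.castSucc)
    (Fml.orF (singF (Fin.last m) a.castSucc) (upairF (Fin.last m) a.castSucc b.castSucc)))

/-- `⟨x, y⟩ ∈ f` -/
def pairMemF {m : ℕ} (x y f : Fin m) : Fml m :=
  .ex (.and (.mem (Fin.last m) f.castSucc) (isPairF (Fin.last m) x.castSucc y.castSucc))

/-- `f` is a function -/
def funF {m : ℕ} (f : Fin m) : Fml m :=
  Fml.and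
    (Fml.allF (Fml.imp (.mem (Fin.last m) f.castSucc)
      (.ex (.ex (isPairF ((Fin.last m).castSucc.castSucc) ((Fin.last (m+1)).castSucc)
        (Fin.last (m+2)))))))
    (Fml.allF (Fml.allF (Fml.allF
      (Fml.imp
        (.and (pairMemF ((Fin.last m).castSucc.castSucc) ((Fin.last (m+1)).castSucc)
                (f.castSucc.castSucc.castSucc))
              (pairMemF ((Fin.last m).castSucc.castSucc) (Fin.last (m+2))
                (f.castSucc.castSucc.castSucc)))
        (.eq ((Fin.last (m+1)).castSucc) (Fin.last (m+2)))))))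

section Absoluteness

variable {H : Set ZFSet.{0}}

lemma mem_zpair {z x y : ZFSet.{0}} :
    z ∈ ZFSet.pair x y ↔ z = {x} ∨ z = ({x, y} : ZFSet) := by
  simp [ZFSet.pair, ZFSet.mem_pair]

lemma mem_H_of_pair_mem (hT : TransClass H) {a b p : ZFSet.{0}}
    (hp : p ∈ H) (hab : p = ZFSet.pair a b) : a ∈ H ∧ b ∈ H := by
  subst hab
  have h1 : ({a} : ZFSet) ∈ H := hT _ hp _ (mem_zpair.2 (Or.inl rfl))
  have h2 : ({a, b} : ZFSet) ∈ H := hT _ hp _ (mem_zpair.2 (Or.inr rfl))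
  exact ⟨hT _ h1 _ (ZFSet.mem_singleton.2 rfl), hT _ h2 _ (ZFSet.mem_pair.2 (Or.inr rfl))⟩

lemma sat_singF (hT : TransClass H) {m : ℕ} {t a : Fin m} {v : Fin m → ZFSet.{0}}
    (ht : v t ∈ H) (ha : v a ∈ H) :
    Sat H (singF t a) v ↔ v t = ({v a} : ZFSet) := by
  simp only [singF, sat_allF, sat_iffF, sat_mem, sat_eq, Fin.snoc_last, Fin.snoc_castSucc]
  constructor
  · intro h
    apply ZFSet.ext
    intro s
    constructor
    · intro hs
      rw [(h s (hT _ ht _ hs)).1 hs]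
      exact ZFSet.mem_singleton.2 rfl
    · intro hs
      rcases ZFSet.mem_singleton.1 hs with rfl
      exact (h _ ha).2 rfl
  · rintro h x _
    rw [h]
    exact ZFSet.mem_singleton

lemma sat_upairF (hT : TransClass H) {m : ℕ} {t a b : Fin m} {v : Fin m → ZFSet.{0}}
    (ht : v t ∈ H) (ha : v a ∈ H) (hb : v b ∈ H) :
    Sat H (upairF t a b) v ↔ v t = ({v a, v b} : ZFSet) := by
  simp only [upairF, sat_allF, sat_iffF, sat_orF, sat_mem, sat_eq, Fin.snoc_last,
    Fin.snoc_castSucc]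
  constructor
  · intro h
    apply ZFSet.ext
    intro s
    constructor
    · intro hs
      rcases (h s (hT _ ht _ hs)).1 hs with rfl | rfl
      · exact ZFSet.mem_pair.2 (Or.inl rfl)
      · exact ZFSet.mem_pair.2 (Or.inr rfl)
    · intro hs
      rcases ZFSet.mem_pair.1 hs with rfl | rfl
      · exact (h _ ha).2 (Or.inl rfl)
      · exact (h _ hb).2 (Or.inr rfl)
  · rintro h x _
    rw [h]
    exact ZFSet.mem_pair

lemma sat_isPairF (hT : TransClass H) {m : ℕ} {p a b : Fin m} {v : Fin m → ZFSet.{0}}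
    (hp : v p ∈ H) (ha : v a ∈ H) (hb : v b ∈ H)
    (hsa : ({v a} : ZFSet) ∈ H) (hba : ({v a, v b} : ZFSet) ∈ H) :
    Sat H (isPairF p a b) v ↔ v p = ZFSet.pair (v a) (v b) := by
  simp only [isPairF, sat_allF, sat_iffF, sat_orF, sat_mem, Fin.snoc_last, Fin.snoc_castSucc]
  have hs : ∀ x, x ∈ H →
      (Sat H (singF (Fin.last m) a.castSucc) (Fin.snoc v x) ↔ x = ({v a} : ZFSet)) := by
    intro x hx
    rw [sat_singF hT (by simpa using hx) (by simpa using ha)]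
    simp
  have hu : ∀ x, x ∈ H →
      (Sat H (upairF (Fin.last m) a.castSucc b.castSucc) (Fin.snoc v x) ↔
        x = ({v a, v b} : ZFSet)) := by
    intro x hx
    rw [sat_upairF hT (by simpa using hx) (by simpa using ha) (by simpa using hb)]
    simp
  constructor
  · intro h
    apply ZFSet.ext
    intro s
    constructor
    · intro hsp
      have hsH : s ∈ H := hT _ hp _ hsp
      rcases (h s hsH).1 hsp with h1 | h1
      · rw [(hs s hsH).1 h1]; exact mem_zpair.2 (Or.inl rfl)
      · rw [(hu s hsH).1 h1]; exact mem_zpair.2 (Or.inr rfl)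
    · intro hsp
      rcases mem_zpair.1 hsp with rfl | rfl
      · exact (h _ hsa).2 (Or.inl ((hs _ hsa).2 rfl))
      · exact (h _ hba).2 (Or.inr ((hu _ hba).2 rfl))
  · rintro h x hx
    rw [h, mem_zpair, hs x hx, hu x hx]

lemma sat_pairMemF (hT : TransClass H) {m : ℕ} {x y f : Fin m} {v : Fin m → ZFSet.{0}}
    (hx : v x ∈ H) (hy : v y ∈ H) (hf : v f ∈ H)
    (hsa : ({v x} : ZFSet) ∈ H) (hba : ({v x, v y} : ZFSet) ∈ H) :
    Sat H (pairMemF x y f) v ↔ ZFSet.pair (v x) (v y) ∈ v f := by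
  simp only [pairMemF, sat_ex, sat_and, sat_mem, Fin.snoc_last, Fin.snoc_castSucc]
  constructor
  · rintro ⟨p, hpH, hpf, hpair⟩
    rw [sat_isPairF hT (by simpa using hpH) (by simpa using hx) (by simpa using hy)
      (by simpa using hsa) (by simpa using hba)] at hpair
    simp only [Fin.snoc_last, Fin.snoc_castSucc] at hpair
    rwa [hpair] at hpf
  · intro h
    refine ⟨ZFSet.pair (v x) (v y), hT _ hf _ h, h, ?_⟩
    rw [sat_isPairF hT (by simpa using hT _ hf _ h) (by simpa using hx) (by simpa using hy)
      (by simpa using hsa) (by simpa using hba)]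
    simp

lemma sat_funF (hT : TransClass H)
    (hsg : ∀ x ∈ H, ({x} : ZFSet) ∈ H)
    (hup : ∀ x ∈ H, ∀ y ∈ H, ({x, y} : ZFSet) ∈ H)
    {m : ℕ} {f : Fin m} {v : Fin m → ZFSet.{0}} (hf : v f ∈ H) :
    Sat H (funF f) v ↔ IsFun (v f) := by
  simp only [funF, sat_and, sat_allF, sat_imp, sat_ex, sat_eq, sat_mem,
    Fin.snoc_last, Fin.snoc_castSucc]
  constructor
  · rintro ⟨h1, h2⟩
    constructor
    · intro z hz
      have hzH : z ∈ H := hT _ hf _ hz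
      obtain ⟨a, haH, b, hbH, hab⟩ := h1 z hzH hz
      rw [sat_isPairF hT (by simp [hzH]) (by simp [haH]) (by simp [hbH])
        (by simp; exact hsg _ haH) (by simp; exact hup _ haH _ hbH)] at hab
      simp only [Fin.snoc_last, Fin.snoc_castSucc] at hab
      exact ⟨a, b, hab⟩
    · intro a b b' hab hab'
      obtain ⟨haH, hbH⟩ := mem_H_of_pair_mem hT (hT _ hf _ hab) rfl
      obtain ⟨-, hb'H⟩ := mem_H_of_pair_mem hT (hT _ hf _ hab') rfl
      have := h2 a haH b hbH b' hb'H
      rw [sat_pairMemF hT (by simp [haH]) (by simp [hbH]) (by simp [hf])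
        (by simp; exact hsg _ haH) (by simp; exact hup _ haH _ hbH),
        sat_pairMemF hT (by simp [haH]) (by simp [hb'H]) (by simp [hf])
        (by simp; exact hsg _ haH) (by simp; exact hup _ haH _ hb'H)] at this
      simp only [Fin.snoc_last, Fin.snoc_castSucc] at this
      exact this ⟨hab, hab'⟩
  · rintro ⟨h1, h2⟩
    constructor
    · intro z hzH hz
      obtain ⟨a, b, hab⟩ := h1 z hz
      obtain ⟨haH, hbH⟩ := mem_H_of_pair_mem hT hzH hab
      refine ⟨a, haH, b, hbH, ?_⟩
      rw [sat_isPairF hT (by simp [hzH]) (by simp [haH]) (by simp [hbH])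
        (by simp; exact hsg _ haH) (by simp; exact hup _ haH _ hbH)]
      simpa using hab
    · intro a haH b hbH b' hb'H
      rw [sat_pairMemF hT (by simp [haH]) (by simp [hbH]) (by simp [hf])
        (by simp; exact hsg _ haH) (by simp; exact hup _ haH _ hbH),
        sat_pairMemF hT (by simp [haH]) (by simp [hb'H]) (by simp [hf])
        (by simp; exact hsg _ haH) (by simp; exact hup _ haH _ hb'H)]
      simp only [Fin.snoc_last, Fin.snoc_castSucc]
      exact fun ⟨u1, u2⟩ => h2 a b b' u1 u2

end Absoluteness

end CcPaper
namespace CcPaper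

/-! ### The Skolem-function formulas -/

section BigFormulas

variable (n : ℕ) (φ : Fml (n + 1))

/-- Redefined conjunction with a designated dummy index. -/
def conjL {m : ℕ} (i0 : Fin m) (l : List (Fml m)) : Fml m :=
  l.foldr .and (.eq i0 i0)

lemma sat_conjL {D : Set ZFSet.{0}} {m : ℕ} (i0 : Fin m) (l : List (Fml m)) (v) :
    Sat D (conjL i0 l) v ↔ ∀ ψ ∈ l, Sat D ψ v := by
  induction l with
  | nil => simp [conjL, Sat]
  | cons a l ih => simp [conjL, Sat] at ih ⊢; tauto

/-- Context `Fin (n+3)` : `f₀ … f_{n-1}, a, z, u`. In the `exs n` block the `y i` live at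
`natAdd (n+3) i`. -/
def conjPM : Fml (n + 3 + n) :=
  conjL (Fin.castAdd n (Fin.last (n+1)).castSucc)
    (List.ofFn fun i : Fin n =>
      pairMemF (Fin.castAdd n (Fin.last (n+1)).castSucc) (Fin.natAdd (n+3) i)
        (Fin.castAdd n i.castSucc.castSucc.castSucc))

def rhoEx : Fin (n + 1) → Fin (n + 3 + n + 1) :=
  Fin.snoc (fun i : Fin n => (Fin.natAdd (n+3) i).castSucc) (Fin.last (n + 3 + n))

def rhoU : Fin (n + 1) → Fin (n + 3 + n) :=
  Fin.snoc (fun i : Fin n => Fin.natAdd (n+3) i) (Fin.castAdd n (Fin.last (n+2)))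

/-- The "Skolem choice at `z`" formula, context `f₀ … f_{n-1}, a, z, u`. -/
def theta : Fml (n + 3) :=
  Fml.imp (exs n (.and (conjPM n) (.ex (φ.rename (rhoEx n)))))
    (exs n (.and (conjPM n) (φ.rename (rhoU n))))

end BigFormulas

section ThetaSat

variable {H : Set ZFSet.{0}} (hT : TransClass H)
  (hsg : ∀ x ∈ H, ({x} : ZFSet) ∈ H)
  (hup : ∀ x ∈ H, ∀ y ∈ H, ({x, y} : ZFSet) ∈ H)
  {n : ℕ} {φ : Fml (n + 1)}

lemma comp_rhoU {v : Fin (n+1) → ZFSet.{0}} {z u : ZFSet.{0}} (y : Fin n → ZFSet.{0}) :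
    (Fin.append (Fin.snoc (Fin.snoc v z) u) y) ∘ (rhoU n) = Fin.snoc y u := by
  funext i
  refine Fin.lastCases ?_ (fun j => ?_) i
  · simp [rhoU]
  · simp [rhoU]

lemma comp_rhoEx {v : Fin (n+1) → ZFSet.{0}} {z u u' : ZFSet.{0}} (y : Fin n → ZFSet.{0}) :
    (Fin.snoc (Fin.append (Fin.snoc (Fin.snoc v z) u) y) u') ∘ (rhoEx n) = Fin.snoc y u' := by
  funext i
  refine Fin.lastCases ?_ (fun j => ?_) i
  · simp [rhoEx]
  · simp [rhoEx, -Fin.castSucc_natAdd]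

include hT hsg hup

lemma sat_conjPM {v : Fin (n+1) → ZFSet.{0}} {z u : ZFSet.{0}}
    (hv : ∀ i, v i ∈ H) (hz : z ∈ H)
    (y : Fin n → ZFSet.{0}) (hy : ∀ i, y i ∈ H) :
    Sat H (conjPM n) (Fin.append (Fin.snoc (Fin.snoc v z) u) y) ↔
      ∀ i : Fin n, ZFSet.pair z (y i) ∈ v i.castSucc := by
  rw [conjPM, sat_conjL]
  simp only [List.mem_ofFn]
  constructor
  · intro h i
    have := h _ ⟨i, rfl⟩
    rw [sat_pairMemF hT (by simp; exact hz) (by simp; exact hy i)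
      (by simp; exact hv i.castSucc) (by simp; exact hsg _ hz)
      (by simp; exact hup _ hz _ (hy i))] at this
    simpa using this
  · rintro h ψ ⟨i, rfl⟩
    rw [sat_pairMemF hT (by simp; exact hz) (by simp; exact hy i)
      (by simp; exact hv i.castSucc) (by simp; exact hsg _ hz)
      (by simp; exact hup _ hz _ (hy i))]
    simpa using h i

lemma sat_theta {v : Fin (n+1) → ZFSet.{0}} {z u : ZFSet.{0}}
    (hv : ∀ i, v i ∈ H) (hz : z ∈ H) :
    Sat H (theta n φ) (Fin.snoc (Fin.snoc v z) u) ↔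
      ((∃ y : Fin n → ZFSet.{0}, (∀ i, y i ∈ H) ∧
          (∀ i, ZFSet.pair z (y i) ∈ v i.castSucc) ∧
          ∃ u', u' ∈ H ∧ Sat H φ (Fin.snoc y u')) →
        ∃ y : Fin n → ZFSet.{0}, (∀ i, y i ∈ H) ∧
          (∀ i, ZFSet.pair z (y i) ∈ v i.castSucc) ∧ Sat H φ (Fin.snoc y u)) := by
  simp only [theta, sat_imp, sat_exs, sat_and, sat_ex]
  constructor
  · intro h hyp
    obtain ⟨y, hy, hpm, u', hu', hsat⟩ := hyp
    have h1 : Sat H (conjPM n) (Fin.append (Fin.snoc (Fin.snoc v z) u) y) := by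
      rw [sat_conjPM hT hsg hup hv hz _ hy]; exact hpm
    have h2 : Sat H (Fml.rename (rhoEx n) φ)
        (Fin.snoc (Fin.append (Fin.snoc (Fin.snoc v z) u) y) u') := by
      rw [sat_rename, comp_rhoEx]; exact hsat
    obtain ⟨y2, hy2, h3, h4⟩ := h ⟨y, hy, h1, u', hu', h2⟩
    rw [sat_conjPM hT hsg hup hv hz _ hy2] at h3
    rw [sat_rename, comp_rhoU] at h4
    exact ⟨y2, hy2, h3, h4⟩
  · intro h hyp
    obtain ⟨y, hy, hcon, u', hu', hsat⟩ := hyp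
    rw [sat_conjPM hT hsg hup hv hz _ hy] at hcon
    rw [sat_rename, comp_rhoEx] at hsat
    obtain ⟨y2, hy2, hpm2, hsat2⟩ := h ⟨y, hy, hcon, u', hu', hsat⟩
    have h1 : Sat H (conjPM n) (Fin.append (Fin.snoc (Fin.snoc v z) u) y2) := by
      rw [sat_conjPM hT hsg hup hv hz _ hy2]; exact hpm2
    have h2 : Sat H (Fml.rename (rhoU n) φ) (Fin.append (Fin.snoc (Fin.snoc v z) u) y2) := by
      rw [sat_rename, comp_rhoU]; exact hsat2
    exact ⟨y2, hy2, h1, h2⟩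

end ThetaSat

end CcPaper
namespace CcPaper

section LamFormula

variable (n : ℕ) (φ : Fml (n + 1))

/-- Context `f₀ … f_{n-1}, a, b, r, z, p` (arity `n+5`); the bound `u` is the value of the
choice function at `z` : the `r`-least element of `{u ∈ b : θ(z,u)}`. -/
def sigmaL : Fin (n + 3) → Fin (n + 6) :=
  Fin.snoc (Fin.snoc (fun i : Fin (n+1) =>
      i.castSucc.castSucc.castSucc.castSucc.castSucc)
    ((Fin.last (n+3)).castSucc.castSucc)) (Fin.last (n+5))

def sigmaL' : Fin (n + 3) → Fin (n + 7) :=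
  Fin.snoc (Fin.snoc (fun i : Fin (n+1) =>
      i.castSucc.castSucc.castSucc.castSucc.castSucc.castSucc)
    ((Fin.last (n+3)).castSucc.castSucc.castSucc)) (Fin.last (n+6))

def bodyL : Fml (n + 7) :=
  Fml.imp
    (.and (.mem (Fin.last (n+6))
        ((Fin.last (n+1)).castSucc.castSucc.castSucc.castSucc.castSucc))
      ((theta n φ).rename (sigmaL' n)))
    (Fml.orF (.eq (Fin.last (n+6)) (Fin.last (n+5)).castSucc)
      (pairMemF (Fin.last (n+5)).castSucc (Fin.last (n+6))
        ((Fin.last (n+2)).castSucc.castSucc.castSucc.castSucc)))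

def lamF : Fml (n + 5) :=
  .ex (.and
    (isPairF (Fin.last (n+4)).castSucc ((Fin.last (n+3)).castSucc.castSucc) (Fin.last (n+5)))
    (.and (.mem (Fin.last (n+5))
        ((Fin.last (n+1)).castSucc.castSucc.castSucc.castSucc))
      (.and ((theta n φ).rename (sigmaL n)) (Fml.allF (bodyL n φ)))))

end LamFormula

section LamSat

variable {H : Set ZFSet.{0}} {n : ℕ} {φ : Fml (n + 1)}

lemma comp_sigmaL {v : Fin (n+3) → ZFSet.{0}} {z p u : ZFSet.{0}} :
    (Fin.snoc (Fin.snoc (Fin.snoc v z) p) u) ∘ (sigmaL n) =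
      Fin.snoc (Fin.snoc (fun i : Fin (n+1) => v i.castSucc.castSucc) z) u := by
  funext i
  refine Fin.lastCases ?_ (fun j => ?_) i
  · simp [sigmaL]
  · refine Fin.lastCases ?_ (fun k => ?_) j <;> simp [sigmaL]

lemma comp_sigmaL' {v : Fin (n+3) → ZFSet.{0}} {z p u u' : ZFSet.{0}} :
    (Fin.snoc (Fin.snoc (Fin.snoc (Fin.snoc v z) p) u) u') ∘ (sigmaL' n) =
      Fin.snoc (Fin.snoc (fun i : Fin (n+1) => v i.castSucc.castSucc) z) u' := by
  funext i
  refine Fin.lastCases ?_ (fun j => ?_) i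
  · simp [sigmaL']
  · refine Fin.lastCases ?_ (fun k => ?_) j <;> simp [sigmaL']

variable (hT : TransClass H)
  (hsg : ∀ x ∈ H, ({x} : ZFSet) ∈ H)
  (hup : ∀ x ∈ H, ∀ y ∈ H, ({x, y} : ZFSet) ∈ H)

include hT hsg hup

lemma sat_lamF {v : Fin (n+3) → ZFSet.{0}} {z p : ZFSet.{0}}
    (hv : ∀ i, v i ∈ H) (hz : z ∈ H) (hp : p ∈ H) :
    Sat H (lamF n φ) (Fin.snoc (Fin.snoc v z) p) ↔
      ∃ u, u ∈ H ∧ p = ZFSet.pair z u ∧ u ∈ v (Fin.last (n+1)).castSucc ∧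
        Sat H (theta n φ)
          (Fin.snoc (Fin.snoc (fun i : Fin (n+1) => v i.castSucc.castSucc) z) u) ∧
        ∀ u', u' ∈ H → u' ∈ v (Fin.last (n+1)).castSucc →
          Sat H (theta n φ)
            (Fin.snoc (Fin.snoc (fun i : Fin (n+1) => v i.castSucc.castSucc) z) u') →
          (u' = u ∨ ZFSet.pair u u' ∈ v (Fin.last (n+2))) := by
  simp only [lamF, sat_ex, sat_and, sat_mem, sat_allF, bodyL, sat_imp, sat_orF, sat_eq]
  constructor
  · rintro ⟨u, huH, hpair, hmem, hth, hmin⟩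
    rw [sat_isPairF hT (by simp; exact hp) (by simp; exact hz) (by simp; exact huH)
      (by simp; exact hsg _ hz) (by simp; exact hup _ hz _ huH)] at hpair
    simp only [Fin.snoc_castSucc, Fin.snoc_last] at hpair hmem
    rw [sat_rename, comp_sigmaL] at hth
    refine ⟨u, huH, hpair, hmem, hth, ?_⟩
    intro u' hu'H hu'b hth'
    have := hmin u' hu'H
    rw [sat_rename, comp_sigmaL'] at this
    simp only [Fin.snoc_castSucc, Fin.snoc_last] at this
    rcases this ⟨hu'b, hth'⟩ with h | h
    · exact Or.inl h
    · rw [sat_pairMemF hT (by simp; exact huH) (by simp; exact hu'H)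
        (by simp; exact hv _) (by simp; exact hsg _ huH)
        (by simp; exact hup _ huH _ hu'H)] at h
      simp only [Fin.snoc_castSucc, Fin.snoc_last] at h
      exact Or.inr h
  · rintro ⟨u, huH, hpair, hmem, hth, hmin⟩
    refine ⟨u, huH, ?_, ?_, ?_, ?_⟩
    · rw [sat_isPairF hT (by simp; exact hp) (by simp; exact hz) (by simp; exact huH)
        (by simp; exact hsg _ hz) (by simp; exact hup _ hz _ huH)]
      simpa using hpair
    · simpa using hmem
    · rw [sat_rename, comp_sigmaL]; exact hth
    · intro u' hu'H
      rw [sat_rename, comp_sigmaL']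
      simp only [Fin.snoc_castSucc, Fin.snoc_last]
      rintro ⟨hu'b, hth'⟩
      rcases hmin u' hu'H hu'b hth' with h | h
      · exact Or.inl h
      · refine Or.inr ?_
        rw [sat_pairMemF hT (by simp; exact huH) (by simp; exact hu'H)
          (by simp; exact hv _) (by simp; exact hsg _ huH)
          (by simp; exact hup _ huH _ hu'H)]
        simpa using h

end LamSat

end CcPaper
namespace CcPaper

section ChiFormula

variable (n : ℕ) (φ : Fml (n + 1))

/-- Context `f₀ … f_{n-1}, a, g, z` + `y` block; pair-membership hypotheses. -/
def conjPM2 : Fml (n + 3 + n) :=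
  conjL (Fin.castAdd n (Fin.last (n+2)))
    (List.ofFn fun i : Fin n =>
      pairMemF (Fin.castAdd n (Fin.last (n+2))) (Fin.natAdd (n+3) i)
        (Fin.castAdd n i.castSucc.castSucc.castSucc))

def rhoW : Fin (n + 1) → Fin (n + 3 + n + 1) :=
  Fin.snoc (fun i : Fin n => (Fin.natAdd (n+3) i).castSucc) (Fin.last (n + 3 + n))

def rhoU2 : Fin (n + 1) → Fin (n + 3 + n + 1 + 1) :=
  Fin.snoc (fun i : Fin n => (Fin.natAdd (n+3) i).castSucc.castSucc) (Fin.last (n + 3 + n + 1))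

def gAppF : Fml (n + 3 + n + 1) :=
  pairMemF (Fin.castAdd n (Fin.last (n+2))).castSucc (Fin.last (n + 3 + n))
    (Fin.castAdd n (Fin.last (n+1)).castSucc).castSucc

def postF : Fml (n + 3 + n + 1) :=
  Fml.imp (.ex (φ.rename (rhoU2 n))) (φ.rename (rhoW n))

def choiceF : Fml (n + 2) :=
  Fml.allF (Fml.imp (.mem (Fin.last (n+2)) ((Fin.last n).castSucc.castSucc))
    (alls n (Fml.imp (conjPM2 n) (.ex (.and (gAppF n) (postF n φ))))))

def bodyF : Fml (n + 2) := .and (funF (Fin.last (n+1))) (choiceF n φ)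

def chiF : Fml (n + 1) := .ex (bodyF n φ)

end ChiFormula

section ChiSat

variable {H : Set ZFSet.{0}} {n : ℕ} {φ : Fml (n + 1)}

lemma comp_rhoW {v : Fin (n+1) → ZFSet.{0}} {g z w : ZFSet.{0}} (y : Fin n → ZFSet.{0}) :
    (Fin.snoc (Fin.append (Fin.snoc (Fin.snoc v g) z) y) w) ∘ (rhoW n) = Fin.snoc y w := by
  funext i
  refine Fin.lastCases ?_ (fun j => ?_) i <;> simp [rhoW, -Fin.castSucc_natAdd]

lemma comp_rhoU2 {v : Fin (n+1) → ZFSet.{0}} {g z w u : ZFSet.{0}} (y : Fin n → ZFSet.{0}) :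
    (Fin.snoc (Fin.snoc (Fin.append (Fin.snoc (Fin.snoc v g) z) y) w) u) ∘ (rhoU2 n) =
      Fin.snoc y u := by
  funext i
  refine Fin.lastCases ?_ (fun j => ?_) i <;> simp [rhoU2, -Fin.castSucc_natAdd]

variable (hT : TransClass H)
  (hsg : ∀ x ∈ H, ({x} : ZFSet) ∈ H)
  (hup : ∀ x ∈ H, ∀ y ∈ H, ({x, y} : ZFSet) ∈ H)

include hT hsg hup

lemma sat_conjPM2 {v : Fin (n+1) → ZFSet.{0}} {g z : ZFSet.{0}}
    (hv : ∀ i, v i ∈ H) (hz : z ∈ H)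
    (y : Fin n → ZFSet.{0}) (hy : ∀ i, y i ∈ H) :
    Sat H (conjPM2 n) (Fin.append (Fin.snoc (Fin.snoc v g) z) y) ↔
      ∀ i : Fin n, ZFSet.pair z (y i) ∈ v i.castSucc := by
  rw [conjPM2, sat_conjL]
  simp only [List.mem_ofFn]
  constructor
  · intro h i
    have := h _ ⟨i, rfl⟩
    rw [sat_pairMemF hT (by simp; exact hz) (by simp; exact hy i)
      (by simp; exact hv i.castSucc) (by simp; exact hsg _ hz)
      (by simp; exact hup _ hz _ (hy i))] at this
    simpa using this
  · rintro h ψ ⟨i, rfl⟩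
    rw [sat_pairMemF hT (by simp; exact hz) (by simp; exact hy i)
      (by simp; exact hv i.castSucc) (by simp; exact hsg _ hz)
      (by simp; exact hup _ hz _ (hy i))]
    simpa using h i

/-- Semantic content of `bodyF` at valuation `(f⃗, a, g)`. -/
lemma sat_bodyF {v : Fin (n+1) → ZFSet.{0}} {g : ZFSet.{0}}
    (hv : ∀ i, v i ∈ H) (hg : g ∈ H) :
    Sat H (bodyF n φ) (Fin.snoc v g) ↔
      (IsFun g ∧ ∀ z, z ∈ H → z ∈ v (Fin.last n) →
        ∀ y : Fin n → ZFSet.{0}, (∀ i, y i ∈ H) →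
          (∀ i, ZFSet.pair z (y i) ∈ v i.castSucc) →
          ∃ w, w ∈ H ∧ ZFSet.pair z w ∈ g ∧
            ((∃ u, u ∈ H ∧ Sat H φ (Fin.snoc y u)) → Sat H φ (Fin.snoc y w))) := by
  simp only [bodyF, sat_and]
  rw [sat_funF hT hsg hup (by simpa using hg)]
  simp only [Fin.snoc_last]
  refine and_congr_right fun _ => ?_
  simp only [choiceF, sat_allF, sat_imp, sat_mem, sat_alls, sat_ex, sat_and, postF]
  constructor
  · intro h z hzH hza y hy hpm
    have h1 := h z hzH
    simp only [Fin.snoc_last, Fin.snoc_castSucc] at h1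
    obtain ⟨w, hwH, hgApp, hpost⟩ := h1 hza y hy
      (by rw [sat_conjPM2 hT hsg hup hv hzH _ hy]; exact hpm)
    rw [gAppF, sat_pairMemF hT (by simp; exact hzH) (by simp; exact hwH)
      (by simp; exact hg) (by simp; exact hsg _ hzH)
      (by simp; exact hup _ hzH _ hwH)] at hgApp
    simp only [Fin.snoc_castSucc, Fin.snoc_last, Fin.append_left] at hgApp
    refine ⟨w, hwH, hgApp, ?_⟩
    rintro ⟨u, huH, hu⟩
    have h2 := hpost ⟨u, huH, by rw [sat_rename, comp_rhoU2]; exact hu⟩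
    rw [sat_rename, comp_rhoW] at h2
    exact h2
  · intro h z hzH
    simp only [Fin.snoc_last, Fin.snoc_castSucc]
    intro hza y hy hpm
    rw [sat_conjPM2 hT hsg hup hv hzH _ hy] at hpm
    obtain ⟨w, hwH, hwg, hpost⟩ := h z hzH hza y hy hpm
    refine ⟨w, hwH, ?_, ?_⟩
    · rw [gAppF, sat_pairMemF hT (by simp; exact hzH) (by simp; exact hwH)
        (by simp; exact hg) (by simp; exact hsg _ hzH)
        (by simp; exact hup _ hzH _ hwH)]
      simp only [Fin.snoc_castSucc, Fin.snoc_last, Fin.append_left]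
      exact hwg
    · rintro ⟨u, huH, hu⟩
      rw [sat_rename, comp_rhoU2] at hu
      rw [sat_rename, comp_rhoW]
      exact hpost ⟨u, huH, hu⟩

end ChiSat

end CcPaper
namespace CcPaper

section Construction

variable {H : Set ZFSet.{0}}

lemma upair_eq_single (x : ZFSet.{0}) : ({x, x} : ZFSet) = ({x} : ZFSet) := by
  ext z; simp [ZFSet.mem_pair, ZFSet.mem_singleton]

lemma sUnion_pair_eq (x y : ZFSet.{0}) :
    ZFSet.sUnion (ZFSet.pair x y) = ({x, y} : ZFSet) := by
  ext z
  constructor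
  · intro hz
    obtain ⟨t, ht, hzt⟩ := ZFSet.mem_sUnion.1 hz
    rcases mem_zpair.1 ht with rfl | rfl
    · rcases ZFSet.mem_singleton.1 hzt with rfl
      exact ZFSet.mem_pair.2 (Or.inl rfl)
    · exact hzt
  · intro hz
    exact ZFSet.mem_sUnion.2 ⟨{x, y}, mem_zpair.2 (Or.inr rfl), hz⟩

lemma upair_mem (hHzfc : ModelsZFCminus H) {x y : ZFSet.{0}} (hx : x ∈ H) (hy : y ∈ H) :
    ({x, y} : ZFSet) ∈ H := by
  have h1 : ZFSet.pair x y ∈ H := hHzfc.2.2.1 x hx y hy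
  have h2 := hHzfc.2.2.2.1 _ h1
  rwa [sUnion_pair_eq] at h2

lemma single_mem (hHzfc : ModelsZFCminus H) {x : ZFSet.{0}} (hx : x ∈ H) :
    ({x} : ZFSet) ∈ H := by
  have := upair_mem hHzfc hx hx
  rwa [upair_eq_single] at this

/-- The rename map used in the separation step to form `g`. -/
def tauG (n : ℕ) : Fin (n + 5) → Fin (n + 5) :=
  Fin.snoc (Fin.snoc (fun i : Fin (n+3) => i.castSucc.castSucc) (Fin.last (n+4)))
    ((Fin.last (n+3)).castSucc)

lemma comp_tauG {n : ℕ} {vlam : Fin (n+3) → ZFSet.{0}} {p z : ZFSet.{0}} :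
    (Fin.snoc (Fin.snoc vlam p) z) ∘ (tauG n) = Fin.snoc (Fin.snoc vlam z) p := by
  funext i
  refine Fin.lastCases ?_ (fun j => ?_) i
  · simp [tauG]
  · refine Fin.lastCases ?_ (fun k => ?_) j <;> simp [tauG]

/-- The separation formula defining `g` from the collection pool `c`. -/
def phiG (n : ℕ) (φ : Fml (n + 1)) : Fml (n + 4) :=
  .ex (.and (.mem (Fin.last (n+4)) ((Fin.last n).castSucc.castSucc.castSucc.castSucc))
    ((lamF n φ).rename (tauG n)))

/-- Main construction : inside `H` there is a Skolem choice function for `φ` on `a`. -/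
lemma exists_sat_chi (hT : TransClass H) (hHzfc : ModelsZFCminus H)
    {n : ℕ} (φ : Fml (n + 1)) (v : Fin (n + 1) → ZFSet.{0})
    (hv : ∀ i, v i ∈ H) (hfun : ∀ i : Fin n, IsFun (v i.castSucc)) :
    Sat H (chiF n φ) v := by
  classical
  have hsg : ∀ x ∈ H, ({x} : ZFSet) ∈ H := fun x hx => single_mem hHzfc hx
  have hup : ∀ x ∈ H, ∀ y ∈ H, ({x, y} : ZFSet) ∈ H :=
    fun x hx y hy => upair_mem hHzfc hx hy
  set a := v (Fin.last n) with ha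
  have haH : a ∈ H := hv _
  -- Step 1 : collection along θ
  have hyp1 : ∀ z ∈ a.toSet, ∃ u ∈ H,
      Sat H (theta n φ) (Fin.snoc (Fin.snoc v z) u) := by
    intro z hz
    have hzH : z ∈ H := hT _ haH _ ((Iff.rfl : _ ↔ _).1 hz)
    by_cases hcase : ∃ y : Fin n → ZFSet.{0}, (∀ i, y i ∈ H) ∧
        (∀ i, ZFSet.pair z (y i) ∈ v i.castSucc) ∧
        ∃ u', u' ∈ H ∧ Sat H φ (Fin.snoc y u')
    · obtain ⟨y, hy, hpm, u', hu'H, hs⟩ := hcase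
      refine ⟨u', hu'H, ?_⟩
      rw [sat_theta hT hsg hup hv hzH]
      intro _
      exact ⟨y, hy, hpm, hs⟩
    · refine ⟨∅, hHzfc.1, ?_⟩
      rw [sat_theta hT hsg hup hv hzH]
      intro hyp
      exact absurd (by
        obtain ⟨y, hy, hpm, u', hu'⟩ := hyp
        exact ⟨y, hy, hpm, u', hu'⟩) hcase
  obtain ⟨b, hbH, hb⟩ := hHzfc.2.2.2.2.2.1 (n+1) (theta n φ) v hv a haH hyp1
  -- Step 2 : a wellordering of b
  obtain ⟨r, hrH, hwo⟩ := hHzfc.2.2.2.2.2.2 b hbH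
  -- parameters for λ
  set vlam : Fin (n+3) → ZFSet.{0} := Fin.snoc (Fin.snoc v b) r with hvlam
  have hvlamH : ∀ i, vlam i ∈ H := by
    intro i
    refine Fin.lastCases ?_ (fun j => ?_) i
    · simp [hvlam, hrH]
    · refine Fin.lastCases ?_ (fun k => ?_) j <;> simp [hvlam, hbH, hv]
  have hvlamres : (fun i : Fin (n+1) => vlam i.castSucc.castSucc) = v := by
    funext i; simp [hvlam]
  have hvlamb : vlam (Fin.last (n+1)).castSucc = b := by simp [hvlam]
  have hvlamr : vlam (Fin.last (n+2)) = r := by simp [hvlam]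
  -- Step 3 : collection along λ
  have hyp2 : ∀ z ∈ a.toSet, ∃ p ∈ H,
      Sat H (lamF n φ) (Fin.snoc (Fin.snoc vlam z) p) := by
    intro z hz
    have hzH : z ∈ H := hT _ haH _ ((Iff.rfl : _ ↔ _).1 hz)
    obtain ⟨u0, hu0b, hu0⟩ := hb z hz
    have hu0H : u0 ∈ H := hT _ hbH _ hu0b
    -- the set of candidates via separation
    obtain ⟨S, hSH, hS⟩ := hHzfc.2.2.2.2.1 (n+2) (theta n φ) (Fin.snoc v z)
      (by intro i; refine Fin.lastCases ?_ (fun j => ?_) i <;> simp [hzH, hv]) b hbH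
    have hSsub : S ⊆ b := ZFSet.subset_def.2 (fun t ht => ((hS t).1 ht).1)
    have hSne : ∃ t, t ∈ S := ⟨u0, (hS u0).2 ⟨hu0b, hu0⟩⟩
    obtain ⟨um, humS, hmin⟩ := hwo.2.2.2 S hSH hSsub hSne
    have humb : um ∈ b := hSsub humS
    have humH : um ∈ H := hT _ hbH _ humb
    have hpH : ZFSet.pair z um ∈ H := hHzfc.2.2.1 z hzH um humH
    refine ⟨ZFSet.pair z um, hpH, ?_⟩
    rw [sat_lamF hT hsg hup hvlamH hzH hpH]
    rw [hvlamb, hvlamr, hvlamres]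
    refine ⟨um, humH, rfl, humb, ((hS um).1 humS).2, ?_⟩
    intro u' hu'H hu'b hth'
    by_cases he : u' = um
    · exact Or.inl he
    · exact Or.inr (hmin u' ((hS u').2 ⟨hu'b, hth'⟩) he)
  obtain ⟨c, hcH, hc⟩ := hHzfc.2.2.2.2.2.1 (n+3) (lamF n φ) vlam hvlamH a haH hyp2
  -- Step 4 : separation to carve out g
  obtain ⟨g, hgH, hgmem⟩ := hHzfc.2.2.2.2.1 (n+3) (phiG n φ) vlam hvlamH c hcH
  have hgchar : ∀ p : ZFSet.{0}, p ∈ g ↔ p ∈ c ∧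
      ∃ z, z ∈ H ∧ z ∈ a ∧ Sat H (lamF n φ) (Fin.snoc (Fin.snoc vlam z) p) := by
    intro p
    rw [hgmem p]
    refine and_congr_right fun _ => ?_
    simp only [phiG, sat_ex, sat_and, sat_mem, sat_rename, comp_tauG]
    constructor
    · rintro ⟨z, hzH, hmem, hlam⟩
      refine ⟨z, hzH, ?_, hlam⟩
      simpa [hvlam] using hmem
    · rintro ⟨z, hzH, hmem, hlam⟩
      refine ⟨z, hzH, ?_, hlam⟩
      simpa [hvlam] using hmem
  -- the characterization of members of g
  have hgelt : ∀ p : ZFSet.{0}, p ∈ g →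
      ∃ z u, z ∈ H ∧ u ∈ H ∧ p = ZFSet.pair z u ∧ u ∈ b ∧
        Sat H (theta n φ) (Fin.snoc (Fin.snoc v z) u) ∧
        ∀ u', u' ∈ H → u' ∈ b →
          Sat H (theta n φ) (Fin.snoc (Fin.snoc v z) u') →
          (u' = u ∨ ZFSet.pair u u' ∈ r) := by
    intro p hp
    obtain ⟨hpc, z, hzH, hza, hlam⟩ := (hgchar p).1 hp
    have hpHmem : p ∈ H := hT _ hcH _ hpc
    rw [sat_lamF hT hsg hup hvlamH hzH hpHmem, hvlamb, hvlamr, hvlamres] at hlam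
    obtain ⟨u, huH, rfl, hub, hth, hmin⟩ := hlam
    exact ⟨z, u, hzH, huH, rfl, hub, hth, hmin⟩
  -- Step 5 : verify bodyF
  refine ⟨g, hgH, ?_⟩
  rw [sat_bodyF hT hsg hup hv hgH]
  constructor
  · constructor
    · intro t ht
      obtain ⟨z, u, _, _, rfl, _⟩ := hgelt t ht
      exact ⟨z, u, rfl⟩
    · intro z u u' hzu hzu'
      obtain ⟨z1, u1, hz1H, hu1H, he1, hub1, hth1, hmin1⟩ := hgelt _ hzu
      obtain ⟨z2, u2, hz2H, hu2H, he2, hub2, hth2, hmin2⟩ := hgelt _ hzu'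
      obtain ⟨rfl, rfl⟩ := ZFSet.pair_injective he1
      obtain ⟨rfl, rfl⟩ := ZFSet.pair_injective he2
      by_contra hne
      rcases hmin1 u' hu2H hub2 hth2 with h | h
      · exact hne h.symm
      rcases hmin2 u hu1H hub1 hth1 with h' | h'
      · exact hne h'
      have := (hwo.2.1 u ((Iff.rfl : _ ↔ _).2 hub1) u' ((Iff.rfl : _ ↔ _).2 hub2)
        (fun hx => hne hx)).1 h
      exact this h'
  · intro z hzH hza y hy hpm
    obtain ⟨p, hpc, hlam⟩ := hc z ((Iff.rfl : _ ↔ _).2 hza)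
    have hpg : p ∈ g := (hgchar _).2 ⟨hpc, z, hzH, hza, hlam⟩
    have hpHmem : p ∈ H := hT _ hcH _ hpc
    rw [sat_lamF hT hsg hup hvlamH hzH hpHmem, hvlamb, hvlamr, hvlamres] at hlam
    obtain ⟨w, hwH, rfl, hwb, hth, -⟩ := hlam
    refine ⟨w, hwH, hpg, ?_⟩
    rintro ⟨u, huH, hsu⟩
    rw [sat_theta hT hsg hup hv hzH] at hth
    obtain ⟨y2, hy2, hpm2, hsat2⟩ := hth ⟨y, hy, hpm, u, huH, hsu⟩
    have hyy : y2 = y := funext fun i => (hfun i).2 z (y2 i) (y i) (hpm2 i) (hpm i)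
    rwa [hyy] at hsat2

end Construction

end CcPaper
namespace CcPaper

section Main

variable {H M : Set ZFSet.{0}} {x : ZFSet.{0}}

lemma hull_subset (hT : TransClass H) (hMH : M ⊆ H) : Hull M x ⊆ H := by
  rintro y ⟨f, hfM, hfun, hpair⟩
  have hfH : f ∈ H := hMH hfM
  have hpH : ZFSet.pair x y ∈ H := hT _ hfH _ hpair
  exact (mem_H_of_pair_mem hT hpH rfl).2

/-- The Tarski–Vaught witness step for the hull. -/
lemma hull_witness (hT : TransClass H) (hHzfc : ModelsZFCminus H)
    (hM : ElemSub M H) (hx : ∃ a ∈ M, x ∈ a)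
    {n : ℕ} (φ : Fml (n + 1)) (v : Fin n → ZFSet.{0})
    (hvh : ∀ i, v i ∈ Hull M x) (hex : ∃ u ∈ H, Sat H φ (Fin.snoc v u)) :
    ∃ w ∈ Hull M x, Sat H φ (Fin.snoc v w) := by
  classical
  obtain ⟨a, haM, hxa⟩ := hx
  choose f hfM hffun hfpair using hvh
  set vp : Fin (n+1) → ZFSet.{0} := Fin.snoc f a with hvp
  have hvpM : ∀ i, vp i ∈ M := by
    intro i
    refine Fin.lastCases ?_ (fun j => ?_) i <;> simp [hvp, haM, hfM]
  have hvpH : ∀ i, vp i ∈ H := fun i => hM.1 (hvpM i)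
  have hvpf : ∀ i : Fin n, vp i.castSucc = f i := by intro i; simp [hvp]
  have hvpa : vp (Fin.last n) = a := by simp [hvp]
  have hfun' : ∀ i : Fin n, IsFun (vp i.castSucc) := by
    intro i; rw [hvpf]; exact hffun i
  have hchi : Sat H (chiF n φ) vp := exists_sat_chi hT hHzfc φ vp hvpH hfun'
  have hchiM : Sat M (chiF n φ) vp := (hM.2 (chiF n φ) vp hvpM).2 hchi
  obtain ⟨g, hgM, hbodyM⟩ := hchiM
  have hbodyH : Sat H (bodyF n φ) (Fin.snoc vp g) := by
    refine (hM.2 (bodyF n φ) (Fin.snoc vp g) ?_).1 hbodyM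
    intro i
    refine Fin.lastCases ?_ (fun j => ?_) i
    · simpa using hgM
    · simpa using hvpM j
  have hsg : ∀ z ∈ H, ({z} : ZFSet) ∈ H := fun z hz => single_mem hHzfc hz
  have hup : ∀ z ∈ H, ∀ w ∈ H, ({z, w} : ZFSet) ∈ H :=
    fun z hz w hw => upair_mem hHzfc hz hw
  rw [sat_bodyF hT hsg hup hvpH (hM.1 hgM)] at hbodyH
  obtain ⟨hgfun, hchoice⟩ := hbodyH
  have hxH : x ∈ H := hT _ (hM.1 haM) _ hxa
  have hvH : ∀ i, v i ∈ H := fun i =>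
    hull_subset hT hM.1 ⟨f i, hfM i, hffun i, hfpair i⟩
  obtain ⟨w, hwH, hwg, himp⟩ := hchoice x hxH (by rwa [hvpa]) v hvH
    (by intro i; rw [hvpf]; exact hfpair i)
  refine ⟨w, ⟨g, hgM, hgfun, hwg⟩, ?_⟩
  apply himp
  obtain ⟨u, huH, hu⟩ := hex
  exact ⟨u, huH, hu⟩

end Main

end CcPaper
namespace CcPaper
/-- `Hull(M,x)` is an elementary substructure of `𝓗`. -/
theorem hull_elemSub
    (H : Set ZFSet.{0}) (hHtrans : TransClass H) (hHzfc : ModelsZFCminus H)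
    (M : Set ZFSet.{0}) (hMc : M.Countable) (hM : ElemSub M H)
    (x : ZFSet.{0}) (hx : ∃ a ∈ M, x ∈ a) :
    ElemSub (Hull M x) H := by
  refine ⟨hull_subset hHtrans hM.1, ?_⟩
  intro n φ
  induction φ with
  | mem i j => intro v hv; exact Iff.rfl
  | eq i j => intro v hv; exact Iff.rfl
  | not ψ ih => intro v hv; exact not_congr (ih v hv)
  | and ψ χ ih₁ ih₂ => intro v hv; exact and_congr (ih₁ v hv) (ih₂ v hv)
  | ex ψ ih =>
      intro v hv
      constructor
      · rintro ⟨w, hwHull, hs⟩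
        have hwsnoc : ∀ i, (Fin.snoc v w : Fin _ → ZFSet.{0}) i ∈ Hull M x := by
          intro i
          refine Fin.lastCases ?_ (fun j => ?_) i
          · simpa using hwHull
          · simpa using hv j
        exact ⟨w, hull_subset hHtrans hM.1 hwHull, (ih _ hwsnoc).1 hs⟩
      · rintro ⟨u, huH, hs⟩
        obtain ⟨w, hwHull, hsw⟩ := hull_witness hHtrans hHzfc hM hx ψ v hv ⟨u, huH, hs⟩
        have hwsnoc : ∀ i, (Fin.snoc v w : Fin _ → ZFSet.{0}) i ∈ Hull M x := by
          intro i
          refine Fin.lastCases ?_ (fun j => ?_) i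
          · simpa using hwHull
          · simpa using hv j
        exact ⟨w, hwHull, (ih _ hwsnoc).2 hsw⟩
end CcPaper
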